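/- arXiv:gr-qc/0104090 — 3 statements merged into one kernel-verified Lean document; each statement's English description precedes it below -/
import Mathlib

section
/- A nonzero rank-r tensor T has the dominant property if and only if T(u_1,...,u_r) > 0 (strictly) for every choice of timelike future-pointing vectors u_1,...,u_r. -/
noncomputable section

/-- Minkowski signature factors: (+1, -1, ..., -1). -/
def eta {n : ℕ} (i : Fin (n + 1)) : ℝ := if i = 0 then 1 else -1

/-- The Minkowski (Lorentzian) inner product of signature (+,-,...,-). -/
def mink {n : ℕ} (u v : Fin (n + 1) → ℝ) : ℝ := ∑ i, eta i * u i * v i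

/-- A causal future-pointing vector. -/
def CausalFuture {n : ℕ} (u : Fin (n + 1) → ℝ) : Prop :=
  0 ≤ mink u u ∧ u ≠ 0 ∧ 0 < u 0

/-- A null future-pointing vector. -/
def NullFuture {n : ℕ} (u : Fin (n + 1) → ℝ) : Prop :=
  mink u u = 0 ∧ u ≠ 0 ∧ 0 < u 0

/-- A timelike future-pointing vector. -/
def TimelikeFuture {n : ℕ} (u : Fin (n + 1) → ℝ) : Prop :=
  0 < mink u u ∧ 0 < u 0

/-- The Lorentzian metric as a matrix (covariant components). -/
def gMat {n : ℕ} : Matrix (Fin (n + 1)) (Fin (n + 1)) ℝ := Matrix.diagonal eta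

/-- Contraction of a rank-2 covariant tensor with two vectors. -/
def quad {n : ℕ} (T : Matrix (Fin (n + 1)) (Fin (n + 1)) ℝ) (u v : Fin (n + 1) → ℝ) : ℝ :=
  ∑ a, ∑ b, u a * T a b * v b

/-- The dominant property for rank-2 tensors. -/
def DP2 {n : ℕ} (T : Matrix (Fin (n + 1)) (Fin (n + 1)) ℝ) : Prop :=
  ∀ u v, CausalFuture u → CausalFuture v → 0 ≤ quad T u v

/-- (T ₂×₂ T)_{ab} = T_{ac} T_b{}^c : contraction on the second index of each factor. -/
def sq2 {n : ℕ} (T : Matrix (Fin (n + 1)) (Fin (n + 1)) ℝ) :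
    Matrix (Fin (n + 1)) (Fin (n + 1)) ℝ :=
  Matrix.of fun a b => ∑ c, eta c * T a c * T b c

/-- (T ₁×₁ T)_{ab} = T_{ca} T^c{}_b : contraction on the first index of each factor. -/
def sq1 {n : ℕ} (T : Matrix (Fin (n + 1)) (Fin (n + 1)) ℝ) :
    Matrix (Fin (n + 1)) (Fin (n + 1)) ℝ :=
  Matrix.of fun a b => ∑ c, eta c * T c a * T c b

/-- The linear map v^a ↦ v^a T_a{}^b defined by a rank-2 tensor T. -/
def tmap {n : ℕ} (T : Matrix (Fin (n + 1)) (Fin (n + 1)) ℝ) (v : Fin (n + 1) → ℝ) :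
    Fin (n + 1) → ℝ := fun b => eta b * ∑ a, v a * T a b

/-- (A×B)_{ab} := A_{ca} B^c{}_b. -/
def xprod {n : ℕ} (A B : Matrix (Fin (n + 1)) (Fin (n + 1)) ℝ) :
    Matrix (Fin (n + 1)) (Fin (n + 1)) ℝ :=
  Matrix.of fun a b => ∑ c, eta c * A c a * B c b

/-- The dominant property for rank-r covariant tensors. -/
def DP {n r : ℕ} (T : MultilinearMap ℝ (fun _ : Fin r => (Fin (n + 1) → ℝ)) ℝ) : Prop :=
  ∀ u : Fin r → (Fin (n + 1) → ℝ), (∀ i, CausalFuture (u i)) → 0 ≤ T u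

/-!
Causal future vectors are limits of timelike ones (`u + s e₀` with `s → 0⁺`), and a multilinear
form on a finite-dimensional space is continuous, so strict positivity on timelike tuples gives
the dominant property.

Conversely, let `T` be dominant with `T u = 0` for a timelike tuple `u`. Each `u i` is interior
to the causal cone, so `u i ± ε w` is causal for small `ε`; since `T` is affine in slot `i`,
`0 ≤ ±ε T (u with w in slot i)` forces that value to vanish. Replacing the slots one at a time,
`T` vanishes on all timelike tuples, and timelike vectors (an open set) span the space, so `T = 0`.
-/

open Filter Topology Set Function

theorem MultilinearMap.continuous_of_finiteDimensional {𝕜 ι N : Type*} {M : ι → Type*}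
    [NontriviallyNormedField 𝕜] [CompleteSpace 𝕜] [Fintype ι]
    [∀ i, AddCommGroup (M i)] [∀ i, Module 𝕜 (M i)] [∀ i, TopologicalSpace (M i)]
    [∀ i, IsTopologicalAddGroup (M i)] [∀ i, ContinuousSMul 𝕜 (M i)] [∀ i, T2Space (M i)]
    [∀ i, FiniteDimensional 𝕜 (M i)] [AddCommMonoid N] [Module 𝕜 N] [TopologicalSpace N]
    [ContinuousAdd N] [ContinuousSMul 𝕜 N] (f : MultilinearMap 𝕜 M N) : Continuous f := by
  classical
  let b i := Module.finBasis 𝕜 (M i)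
  have hexpand : ⇑f = fun m => ∑ k : ∀ i, Fin (Module.finrank 𝕜 (M i)),
      (∏ i, (b i).equivFun (m i) (k i)) • f fun i => b i (k i) := by
    ext m
    conv_lhs => rw [← funext fun i => (b i).sum_equivFun (m i)]
    simp_rw [f.map_sum, f.map_smul_univ]
  rw [hexpand]
  refine continuous_finsetSum _ fun k _ => (continuous_finsetProd _ fun i _ => ?_).smul
    continuous_const
  exact (continuous_apply (k i)).comp
    ((LinearMap.continuous_of_finiteDimensional (b i).equivFun.toLinearMap).comp
      (continuous_apply i))

theorem IsOpen.exists_pos_add_smul_mem {M : Type*} [AddCommGroup M] [Module ℝ M]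
    [TopologicalSpace M] [ContinuousAdd M] [ContinuousSMul ℝ M] {U : Set M} (hU : IsOpen U)
    {x : M} (hx : x ∈ U) (w : M) : ∃ ε : ℝ, 0 < ε ∧ x + ε • w ∈ U ∧ x + (-ε) • w ∈ U := by
  have hline : ∀ a : ℝ, Tendsto (fun c : ℝ => x + (a * c) • w) (𝓝 0) (𝓝 x) := fun a =>
    Continuous.tendsto' (by fun_prop) 0 x (by simp)
  have hev : ∀ᶠ c : ℝ in 𝓝 0, x + c • w ∈ U ∧ x + (-c) • w ∈ U := by
    filter_upwards [(hline 1).eventually (hU.mem_nhds hx),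
      (hline (-1)).eventually (hU.mem_nhds hx)] with c h₁ h₂
    rw [one_mul] at h₁
    rw [neg_one_mul] at h₂
    exact ⟨h₁, h₂⟩
  obtain ⟨ε, hmem, hε⟩ :=
    ((hev.filter_mono nhdsWithin_le_nhds).and (self_mem_nhdsWithin (s := Ioi 0))).exists
  exact ⟨ε, hε, hmem⟩

namespace MultilinearMap

variable {ι M : Type*} [AddCommGroup M] [Module ℝ M] (T : MultilinearMap ℝ (fun _ : ι => M) ℝ)

theorem nonneg_of_pos_of_subset_closure [TopologicalSpace M] (hcont : Continuous T)
    {S U : Set M} (hSU : S ⊆ closure U) (hpos : ∀ v, (∀ i, v i ∈ U) → 0 < T v) {v : ι → M}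
    (hv : ∀ i, v i ∈ S) : 0 ≤ T v := by
  have hcl : v ∈ closure (univ.pi fun _ => U) := by
    rw [closure_pi_set]
    exact fun i _ => hSU (hv i)
  simpa using map_mem_closure hcont hcl fun w hw => mem_Ioi.2 (hpos w fun i => hw i trivial)

variable [DecidableEq ι]

theorem map_update_eq_zero_of_nonneg {S : Set M} (hT : ∀ v, (∀ i, v i ∈ S) → 0 ≤ T v)
    {u : ι → M} (hu : ∀ i, u i ∈ S) (hu0 : T u = 0) {i : ι} {w : M} {ε : ℝ} (hε : 0 < ε)
    (hpos : u i + ε • w ∈ S) (hneg : u i + (-ε) • w ∈ S) : T (update u i w) = 0 := by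
  have hline : ∀ c : ℝ, u i + c • w ∈ S → 0 ≤ c * T (update u i w) := by
    intro c hc
    have := hT (update u i (u i + c • w)) fun j => by
      rcases eq_or_ne j i with rfl | hj
      · simpa using hc
      · simpa [hj] using hu j
    rwa [T.map_update_add, update_eq_self, hu0, zero_add, T.map_update_smul, smul_eq_mul]
      at this
  nlinarith [hline ε hpos, hline (-ε) hneg]

variable [Fintype ι] [TopologicalSpace M] [ContinuousAdd M] [ContinuousSMul ℝ M]

theorem map_eq_zero_of_nonneg_of_map_eq_zero {S U : Set M} (hU : IsOpen U) (hUS : U ⊆ S)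
    (hT : ∀ v, (∀ i, v i ∈ S) → 0 ≤ T v) {u : ι → M} (hu : ∀ i, u i ∈ U) (hu0 : T u = 0)
    {v : ι → M} (hv : ∀ i, v i ∈ U) : T v = 0 := by
  suffices hpiece : ∀ s : Finset ι, T (s.piecewise v u) = 0 by
    simpa using hpiece Finset.univ
  intro s
  induction s using Finset.induction_on with
  | empty => simpa using hu0
  | insert a s _ ih =>
    have hmem : ∀ i, s.piecewise v u i ∈ U := fun i => by
      by_cases hi : i ∈ s <;> simp [hi, hu, hv]
    obtain ⟨ε, hε, hpos, hneg⟩ := hU.exists_pos_add_smul_mem (hmem a) (v a)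
    rw [Finset.piecewise_insert]
    exact T.map_update_eq_zero_of_nonneg hT (fun i => hUS (hmem i)) ih hε (hUS hpos) (hUS hneg)

theorem eq_zero_of_nonneg_of_map_eq_zero {S U : Set M} (hU : IsOpen U) (hUS : U ⊆ S)
    (hT : ∀ v, (∀ i, v i ∈ S) → 0 ≤ T v) {u : ι → M} (hu : ∀ i, u i ∈ U) (hu0 : T u = 0) :
    T = 0 := by
  have hspan : ∀ i, Submodule.span ℝ (Set.range ((↑) : U → M)) = ⊤ := fun i => by
    rw [Subtype.range_coe]
    refine Submodule.eq_top_of_nonempty_interior' _ ⟨u i, interior_mono Submodule.subset_span ?_⟩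
    rw [hU.interior_eq]
    exact hu i
  exact ext_of_span_eq_top (g := fun _ => ((↑) : U → M)) hspan fun j =>
    T.map_eq_zero_of_nonneg_of_map_eq_zero hU hUS hT hu hu0 fun i => (j i).2

end MultilinearMap

section Minkowski

variable {n : ℕ}

theorem mink_eq (u v : Fin (n + 1) → ℝ) :
    mink u v = u 0 * v 0 - ∑ i : Fin n, u i.succ * v i.succ := by
  simp [mink, Fin.sum_univ_succ, eta, Fin.succ_ne_zero, sub_eq_add_neg]

theorem isOpen_setOf_timelikeFuture : IsOpen {u : Fin (n + 1) → ℝ | TimelikeFuture u} :=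
  (isOpen_lt continuous_const (show Continuous fun u : Fin (n + 1) → ℝ => mink u u by
    unfold mink; fun_prop)).inter (isOpen_lt continuous_const (continuous_apply 0))

theorem TimelikeFuture.causalFuture {u : Fin (n + 1) → ℝ} (hu : TimelikeFuture u) :
    CausalFuture u :=
  ⟨hu.1.le, fun h => by simpa [h] using hu.2, hu.2⟩

theorem CausalFuture.timelikeFuture_add_smul_single {u : Fin (n + 1) → ℝ} (hu : CausalFuture u)
    {s : ℝ} (hs : 0 < s) : TimelikeFuture (u + s • Pi.single 0 1) := by
  have hu₁ := hu.1
  rw [mink_eq] at hu₁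
  refine ⟨?_, by simpa using add_pos hu.2.2 hs⟩
  simp only [mink_eq, Pi.add_apply, Pi.smul_apply, Pi.single_eq_same, smul_eq_mul, mul_one,
    ne_eq, Fin.succ_ne_zero, not_false_eq_true, Pi.single_eq_of_ne, mul_zero, add_zero, sub_pos]
  nlinarith [hu.2.2]

theorem CausalFuture.mem_closure_setOf_timelikeFuture {u : Fin (n + 1) → ℝ}
    (hu : CausalFuture u) : u ∈ closure {v | TimelikeFuture v} :=
  mem_closure_of_tendsto (b := 𝓝[>] (0 : ℝ))
    ((Continuous.tendsto' (f := fun s : ℝ => u + s • Pi.single 0 1) (by fun_prop) 0 u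
      (by simp)).mono_left nhdsWithin_le_nhds)
    (eventually_nhdsWithin_of_forall fun _ hs => hu.timelikeFuture_add_smul_single hs)

end Minkowski

/-- a nonzero T is in DP iff it is strictly positive on timelike
future-pointing vectors. -/
theorem stmt2 {n r : ℕ} (T : MultilinearMap ℝ (fun _ : Fin r => (Fin (n + 1) → ℝ)) ℝ)
    (hT : T ≠ 0) :
    DP T ↔ ∀ u : Fin r → (Fin (n + 1) → ℝ), (∀ i, TimelikeFuture (u i)) → 0 < T u := by
  constructor
  · intro hDP u hu
    refine (hDP u fun i => (hu i).causalFuture).lt_of_ne' fun hu0 => hT ?_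
    exact T.eq_zero_of_nonneg_of_map_eq_zero isOpen_setOf_timelikeFuture
      (fun _ hv => TimelikeFuture.causalFuture hv) hDP hu hu0
  · intro hpos u hu
    exact T.nonneg_of_pos_of_subset_closure T.continuous_of_finiteDimensional
      (fun _ hv => CausalFuture.mem_closure_setOf_timelikeFuture hv) hpos hu
end
end

section
/- A completely symmetric rank-r tensor T satisfies that its square (T×T) obtained by contracting one index from each factor vanishes if and only if T = f·k⊗...⊗k for some scalar f and some null vector k. -/
/-! Write `a(u)_c = T(u, e_c)` for the components left free by the last slot. Then
`(T×T)(u, v) = ⟨a(u), a(v)⟩`, so a vanishing square makes all `a(u)` mutually orthogonal null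
vectors, and in Lorentzian signature these are all multiples of one null vector `x`. Lowering the
index of `x` gives a null `k` with `T(u, w) = c(u) ⟨k, w⟩`; symmetry moves this factorisation to
every slot, whence `T = T(z, …, z) ∏ ⟨k, u_i⟩` for any `z` with `⟨k, z⟩ = 1`. Conversely, for
`T = f k ⊗ ⋯ ⊗ k` the contraction produces the factor `⟨k, k⟩ = 0`. -/

noncomputable section

/-- The square of a rank-(r+1) tensor obtained by contracting the last index of each
factor via the inverse metric. -/
def sqLast {n r : ℕ} (T : MultilinearMap ℝ (fun _ : Fin (r + 1) => (Fin (n + 1) → ℝ)) ℝ)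
    (u v : Fin r → (Fin (n + 1) → ℝ)) : ℝ :=
  ∑ c, eta c * T (Fin.snoc u (Pi.single c 1)) * T (Fin.snoc v (Pi.single c 1))

lemma eta_mul_self {n : ℕ} (i : Fin (n + 1)) : eta i * eta i = 1 := by
  unfold eta; split_ifs <;> norm_num

lemma mink_single {n : ℕ} (k : Fin (n + 1) → ℝ) (c : Fin (n + 1)) (t : ℝ) :
    mink k (Pi.single c t) = eta c * k c * t := by
  simp only [mink, Pi.single_apply]
  rw [Finset.sum_eq_single c] <;> simp +contextual [eq_comm]

lemma mink_eta_mul_left {n : ℕ} (x w : Fin (n + 1) → ℝ) :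
    mink (fun c => eta c * x c) w = ∑ c, x c * w c := by
  refine Finset.sum_congr rfl fun c _ => ?_
  linear_combination x c * w c * eta_mul_self c

lemma exists_mink_eq_one {n : ℕ} {k : Fin (n + 1) → ℝ} (hk : k ≠ 0) : ∃ z, mink k z = 1 := by
  obtain ⟨i, hi⟩ := Function.ne_iff.mp hk
  refine ⟨Pi.single i (eta i * (k i)⁻¹), ?_⟩
  calc mink k (Pi.single i (eta i * (k i)⁻¹)) = (eta i * eta i) * (k i * (k i)⁻¹) := by
        rw [mink_single]; ring
    _ = 1 := by rw [eta_mul_self, mul_inv_cancel₀ hi, one_mul]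

lemma eq_zero_of_mink_self_eq_zero {n : ℕ} {w : Fin (n + 1) → ℝ} (h : mink w w = 0)
    (h0 : w 0 = 0) : w = 0 := by
  have hsq : ∑ i, w i * w i = 0 := by
    rw [← neg_eq_zero, ← h, mink, ← Finset.sum_neg_distrib]
    refine Finset.sum_congr rfl fun i _ => ?_
    by_cases hi : i = 0
    · simp [hi, h0]
    · simp [eta, hi]
  funext i
  exact mul_self_eq_zero.mp <|
    (Finset.sum_eq_zero_iff_of_nonneg fun i _ => mul_self_nonneg (w i)).mp hsq i (Finset.mem_univ i)

lemma mink_smul_sub_smul_self {n : ℕ} (x y : Fin (n + 1) → ℝ) :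
    mink (x 0 • y - y 0 • x) (x 0 • y - y 0 • x)
      = x 0 ^ 2 * mink y y - 2 * x 0 * y 0 * mink x y + y 0 ^ 2 * mink x x := by
  simp only [mink, Finset.mul_sum, ← Finset.sum_sub_distrib, ← Finset.sum_add_distrib]
  refine Finset.sum_congr rfl fun i _ => ?_
  simp only [Pi.sub_apply, Pi.smul_apply, smul_eq_mul]
  ring

/-- Orthogonal null vectors are parallel: `x 0 • y - y 0 • x` is null with vanishing time
component, and in Lorentzian signature such a vector is zero. -/
lemma smul_eq_smul_of_mink_eq_zero {n : ℕ} {x y : Fin (n + 1) → ℝ} (hx : mink x x = 0)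
    (hy : mink y y = 0) (hxy : mink x y = 0) : x 0 • y = y 0 • x := by
  rw [← sub_eq_zero]
  refine eq_zero_of_mink_self_eq_zero ?_ ?_
  · rw [mink_smul_sub_smul_self, hx, hy, hxy]; ring
  · simp [mul_comm]

lemma exists_null_forall_eq_smul {α : Type*} {n : ℕ} (a : α → Fin (n + 1) → ℝ)
    (h : ∀ u v, mink (a u) (a v) = 0) : ∃ x, mink x x = 0 ∧ ∀ u, ∃ c : ℝ, a u = c • x := by
  by_cases hzero : ∀ u, a u = 0
  · exact ⟨0, by simp [mink], fun u => ⟨0, by simp [hzero u]⟩⟩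
  obtain ⟨u₀, hu₀⟩ := not_forall.mp hzero
  have hx0 : a u₀ 0 ≠ 0 := fun h0 => hu₀ (eq_zero_of_mink_self_eq_zero (h u₀ u₀) h0)
  refine ⟨a u₀, h u₀ u₀, fun u => ⟨a u 0 / a u₀ 0, ?_⟩⟩
  rw [div_eq_inv_mul, mul_smul, ← smul_eq_smul_of_mink_eq_zero (h u₀ u₀) (h u u) (h u₀ u),
    inv_smul_smul₀ hx0]

lemma MultilinearMap.apply_snoc_eq_sum {R M : Type*} [CommSemiring R] [AddCommMonoid M]
    [Module R M] {ι : Type*} [Fintype ι] [DecidableEq ι] {r : ℕ}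
    (T : MultilinearMap R (fun _ : Fin (r + 1) => ι → R) M) (u : Fin r → ι → R) (w : ι → R) :
    T (Fin.snoc u w) = ∑ c, w c • T (Fin.snoc u (Pi.single c 1)) := by
  have hlin : ∀ w, T (Fin.snoc u w) = T.toLinearMap (Fin.snoc u 0) (Fin.last r) w := fun w => by
    rw [MultilinearMap.toLinearMap_apply, Fin.update_snoc_last]
  rw [hlin, LinearMap.pi_apply_eq_sum_univ]
  refine Finset.sum_congr rfl fun c _ => ?_
  rw [hlin]
  congr 3
  funext j
  simp [Pi.single_apply, eq_comm]

def lastComponents {n r : ℕ} (T : MultilinearMap ℝ (fun _ : Fin (r + 1) => (Fin (n + 1) → ℝ)) ℝ)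
    (u : Fin r → (Fin (n + 1) → ℝ)) : Fin (n + 1) → ℝ :=
  fun c => T (Fin.snoc u (Pi.single c 1))

lemma sqLast_eq_mink {n r : ℕ} (T : MultilinearMap ℝ (fun _ : Fin (r + 1) => (Fin (n + 1) → ℝ)) ℝ)
    (u v : Fin r → (Fin (n + 1) → ℝ)) :
    sqLast T u v = mink (lastComponents T u) (lastComponents T v) := rfl

lemma exists_null_factor_of_sqLast_eq_zero {n r : ℕ}
    (T : MultilinearMap ℝ (fun _ : Fin (r + 1) => (Fin (n + 1) → ℝ)) ℝ)
    (hsq : ∀ u v, sqLast T u v = 0) :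
    ∃ k, mink k k = 0 ∧ ∀ u, ∃ c : ℝ, ∀ w, T (Fin.snoc u w) = c * mink k w := by
  obtain ⟨x, hxx, hx⟩ := exists_null_forall_eq_smul (lastComponents T)
    fun u v => sqLast_eq_mink T u v ▸ hsq u v
  refine ⟨fun c => eta c * x c, ?_, fun u => ?_⟩
  · rw [mink_eta_mul_left, ← hxx]
    exact Finset.sum_congr rfl fun c _ => by ring
  · obtain ⟨c, hc⟩ := hx u
    refine ⟨c, fun w => ?_⟩
    rw [T.apply_snoc_eq_sum, mink_eta_mul_left, Finset.mul_sum]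
    refine Finset.sum_congr rfl fun i _ => ?_
    change w i * lastComponents T u i = _
    rw [hc, Pi.smul_apply, smul_eq_mul]
    ring

lemma eq_mul_prod_of_forall_update {ι E R : Type*} [Fintype ι] [DecidableEq ι] [CommMonoid R]
    (T : (ι → E) → R) (φ : E → R) (z : E) (h : ∀ v i, T v = T (Function.update v i z) * φ (v i))
    (u : ι → E) : T u = T (fun _ => z) * ∏ i, φ (u i) := by
  suffices ∀ s : Finset ι, T u = T (s.piecewise (fun _ => z) u) * ∏ i ∈ s, φ (u i) by
    simpa using this Finset.univ
  intro s
  induction s using Finset.induction_on with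
  | empty => simp
  | insert i s hi ih =>
    rw [ih, Finset.piecewise_insert, Finset.prod_insert hi, h (s.piecewise _ u) i,
      Finset.piecewise_eq_of_notMem _ _ _ hi]
    ac_rfl

lemma forall_update_of_symmetric {ι E R : Type*} [DecidableEq ι] [Mul R] (T : (ι → E) → R)
    (hsym : ∀ (σ : Equiv.Perm ι) u, T (u ∘ σ) = T u) (φ : E → R) (z : E) (j : ι)
    (h : ∀ v, T v = T (Function.update v j z) * φ (v j)) (v : ι → E) (i : ι) :
    T v = T (Function.update v i z) * φ (v i) := by
  have hswap : Function.update v i z ∘ Equiv.swap i j = Function.update (v ∘ Equiv.swap i j) j z := by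
    rw [Function.update_comp_equiv, Equiv.symm_swap, Equiv.swap_apply_left]
  rw [← hsym (Equiv.swap i j) v, h, ← hswap, hsym, Function.comp_apply, Equiv.swap_apply_right]

lemma eq_mul_prod_of_symmetric_of_apply_snoc {E R : Type*} [CommMonoid R] {r : ℕ}
    (T : (Fin (r + 1) → E) → R) (hsym : ∀ (σ : Equiv.Perm (Fin (r + 1))) u, T (u ∘ σ) = T u)
    {φ : E → R} {z : E} (hz : φ z = 1) (hfac : ∀ u, ∃ c : R, ∀ w, T (Fin.snoc u w) = c * φ w)
    (u : Fin (r + 1) → E) : T u = T (fun _ => z) * ∏ i, φ (u i) := by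
  refine eq_mul_prod_of_forall_update T φ z
    (forall_update_of_symmetric T hsym φ z (Fin.last r) fun v => ?_) u
  obtain ⟨c, hc⟩ := hfac (Fin.init v)
  rw [← Fin.snoc_init_self v, Fin.update_snoc_last, Fin.snoc_last, hc, hc, hz, mul_one]

lemma sqLast_eq_zero_of_eq_mul_prod {n r : ℕ}
    (T : MultilinearMap ℝ (fun _ : Fin (r + 1) => (Fin (n + 1) → ℝ)) ℝ) {f : ℝ}
    {k : Fin (n + 1) → ℝ} (hkk : mink k k = 0) (hT : ∀ u, T u = f * ∏ i, mink k (u i))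
    (u v : Fin r → (Fin (n + 1) → ℝ)) : sqLast T u v = 0 := by
  have hsnoc : ∀ (u : Fin r → (Fin (n + 1) → ℝ)) c, T (Fin.snoc u (Pi.single c 1)) =
      (f * ∏ i, mink k (u i)) * (eta c * k c) := fun u c => by
    rw [hT, Fin.prod_univ_castSucc]
    simp [mink_single, mul_assoc]
  calc sqLast T u v
      = (f * ∏ i, mink k (u i)) * (f * ∏ i, mink k (v i)) * ∑ c, eta c * k c * k c := by
        rw [sqLast, Finset.mul_sum]
        refine Finset.sum_congr rfl fun c _ => ?_
        rw [hsnoc, hsnoc]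
        linear_combination (f * ∏ i, mink k (u i)) * (f * ∏ i, mink k (v i)) * eta c * k c * k c *
          eta_mul_self c
    _ = 0 := by rw [← mink, hkk, mul_zero]

/-- a completely symmetric rank-r tensor has vanishing square iff it is
f·k⊗...⊗k for a scalar f and a null vector k. -/
theorem stmt8 {n r : ℕ} (T : MultilinearMap ℝ (fun _ : Fin (r + 1) => (Fin (n + 1) → ℝ)) ℝ)
    (hsym : ∀ (σ : Equiv.Perm (Fin (r + 1))) (u : Fin (r + 1) → (Fin (n + 1) → ℝ)),
      T (u ∘ σ) = T u) :
    (∀ u v : Fin r → (Fin (n + 1) → ℝ), sqLast T u v = 0) ↔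
      ∃ (f : ℝ) (k : Fin (n + 1) → ℝ), mink k k = 0 ∧
        ∀ u : Fin (r + 1) → (Fin (n + 1) → ℝ), T u = f * ∏ i, mink k (u i) := by
  constructor
  · intro hsq
    obtain ⟨k, hkk, hfac⟩ := exists_null_factor_of_sqLast_eq_zero T hsq
    by_cases hk : k = 0
    · refine ⟨0, k, hkk, fun u => ?_⟩
      obtain ⟨c, hc⟩ := hfac (Fin.init u)
      rw [← Fin.snoc_init_self u, hc, hk]
      simp [mink]
    · obtain ⟨z, hz⟩ := exists_mink_eq_one hk
      exact ⟨T fun _ => z, k, hkk, eq_mul_prod_of_symmetric_of_apply_snoc T hsym hz hfac⟩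
  · rintro ⟨f, k, hkk, hT⟩
    exact sqLast_eq_zero_of_eq_mul_prod T hkk hT
end
end

section
/- If F is a nonzero antisymmetric bilinear form (2-form) on a Lorentzian vector space, then the symmetric rank-2 tensor (F×F)_{ab} = F_{ca} F^c{}_b does not have the dominant property. -/
noncomputable section

/-! The quadratic form `(F×F)(u, u)` is the Minkowski square of the vector `F u`. Take `u` to be
the time axis `e₀` if the row `F₀·` is nonzero, and otherwise the null vector `e₀ + e_j` for a
nonzero column `j` of `F` (which cannot be column `0`, by antisymmetry). In both cases `u` is
future causal and `F u` is a nonzero vector with zero time component, hence spacelike, so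
`(F×F)(u, u) < 0`. -/

open Matrix

lemma mink_self_neg_of_apply_zero {n : ℕ} {w : Fin (n + 1) → ℝ} (h0 : w 0 = 0) (hw : w ≠ 0) :
    mink w w < 0 := by
  have hmink : mink w w = -(w ⬝ᵥ w) := by
    rw [mink, dotProduct, ← Finset.sum_neg_distrib]
    refine Finset.sum_congr rfl fun i _ => ?_
    by_cases hi : i = 0
    · simp [hi, h0]
    · simp [eta, hi]
  have hpos : 0 < w ⬝ᵥ w :=
    lt_of_le_of_ne (Finset.sum_nonneg fun i _ => mul_self_nonneg (w i))
      (Ne.symm (dotProduct_self_eq_zero.not.mpr hw))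
  linarith

lemma quad_sq1_self {n : ℕ} (F : Matrix (Fin (n + 1)) (Fin (n + 1)) ℝ) (u : Fin (n + 1) → ℝ) :
    quad (sq1 F) u u = mink (F *ᵥ u) (F *ᵥ u) := by
  simp only [quad, sq1, mink, mulVec, dotProduct, of_apply, Finset.mul_sum, Finset.sum_mul]
  rw [Finset.sum_comm]
  conv_lhs => arg 2; ext b; rw [Finset.sum_comm]
  rw [Finset.sum_comm]
  exact Finset.sum_congr rfl fun c _ => Finset.sum_congr rfl fun b _ =>
    Finset.sum_congr rfl fun a _ => by ring

lemma causalFuture_single_zero {n : ℕ} : CausalFuture (Pi.single (0 : Fin (n + 1)) (1 : ℝ)) := by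
  refine ⟨?_, ?_, by simp⟩
  · rw [mink, Finset.sum_eq_single 0 (fun i _ hi => by simp [hi]) (by simp)]
    simp [eta]
  · exact Pi.single_ne_zero_iff.mpr one_ne_zero

lemma causalFuture_single_zero_add_single {n : ℕ} {j : Fin (n + 1)} (hj : j ≠ 0) :
    CausalFuture (Pi.single 0 (1 : ℝ) + Pi.single j 1) := by
  refine ⟨?_, fun h => by simpa [hj.symm] using congrFun h 0, by simp [hj.symm]⟩
  rw [mink, Finset.sum_eq_add_of_mem 0 j (Finset.mem_univ _) (Finset.mem_univ _) hj.symm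
    fun c _ hc => by simp [hc.1, hc.2]]
  simp [eta, hj, hj.symm]

lemma not_DP2_sq1_of_causalFuture {n : ℕ} {F : Matrix (Fin (n + 1)) (Fin (n + 1)) ℝ}
    {u : Fin (n + 1) → ℝ} (hu : CausalFuture u) (h0 : (F *ᵥ u) 0 = 0) (hne : F *ᵥ u ≠ 0) :
    ¬ DP2 (sq1 F) := fun hDP => by
  have := hDP u u hu hu
  rw [quad_sq1_self] at this
  exact (mink_self_neg_of_apply_zero h0 hne).not_ge this

/-- for a nonzero 2-form F, the tensor (F×F)_{ab} = F_{ca}F^c{}_b does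
not have the dominant property. -/
theorem stmt9 {n : ℕ} (F : Matrix (Fin (n + 1)) (Fin (n + 1)) ℝ)
    (hF : F ≠ 0) (hanti : ∀ a b, F a b = - F b a) :
    ¬ DP2 (sq1 F) := by
  have hdiag : ∀ a, F a a = 0 := fun a => by linarith [hanti a a]
  by_cases hrow : ∃ k, F 0 k ≠ 0
  · obtain ⟨k, hk⟩ := hrow
    refine not_DP2_sq1_of_causalFuture causalFuture_single_zero (by simp [hdiag]) fun h => hk ?_
    simpa [hanti k 0] using congrFun h k
  · push Not at hrow
    obtain ⟨i, j, hij⟩ : ∃ i j, F i j ≠ 0 := by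
      by_contra! h
      exact hF (Matrix.ext h)
    have hj : j ≠ 0 := by
      rintro rfl
      simp [hanti i 0, hrow] at hij
    refine not_DP2_sq1_of_causalFuture (causalFuture_single_zero_add_single hj)
      (by simp [mulVec_add, hrow]) fun h => hij ?_
    simpa [mulVec_add, hanti i 0, hrow] using congrFun h i
end
end
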